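/- arXiv:2501.06731 — 4 statements merged into one kernel-verified Lean document; each statement's English description precedes it below -/
import Mathlib

section
/- If \mathcal{F} \subseteq S_n is an intersecting family of permutations, then |\mathcal{F}| \le (n-1)!. -/
/-!
Let `c` be the cyclic rotation of `Fin n`. Its powers act freely, so two distinct permutations
`σ` and `σ * c ^ k` in one left coset of `⟨c⟩` never agree at a point. An intersecting family
therefore meets each of the `n! / n = (n - 1)!` left cosets of `⟨c⟩` at most once.
-/

open Subgroup

section FreeSubgroup

variable {G α : Type*} [Group G] [MulAction G α] {H : Subgroup G}

theorem injOn_quotientMk_of_intersecting (hfree : ∀ h ∈ H, ∀ a : α, h • a = a → h = 1)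
    {F : Set G} (hF : ∀ σ ∈ F, ∀ π ∈ F, ∃ a : α, σ • a = π • a) :
    Set.InjOn (QuotientGroup.mk : G → G ⧸ H) F := by
  intro σ hσ π hπ hσπ
  obtain ⟨a, ha⟩ := hF σ hσ π hπ
  have hfix : (σ⁻¹ * π) • a = a := by rw [mul_smul, ← ha, inv_smul_smul]
  have hone : σ⁻¹ * π = 1 := hfree _ (QuotientGroup.eq.mp hσπ) a hfix
  exact (inv_mul_eq_one.mp hone)

theorem card_mul_card_le_of_intersecting [Finite G] (hfree : ∀ h ∈ H, ∀ a : α, h • a = a → h = 1)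
    (F : Finset G) (hF : ∀ σ ∈ F, ∀ π ∈ F, ∃ a : α, σ • a = π • a) :
    F.card * Nat.card H ≤ Nat.card G := by
  classical
  have : Fintype (G ⧸ H) := Fintype.ofFinite _
  have hF' : F.card ≤ Nat.card (G ⧸ H) := by
    rw [← Finset.card_image_of_injOn (injOn_quotientMk_of_intersecting hfree (F := F) hF),
      Nat.card_eq_fintype_card]
    exact Finset.card_le_univ _
  rw [H.card_eq_card_quotient_mul_card_subgroup]
  exact Nat.mul_le_mul_right _ hF'

end FreeSubgroup

section Rotation

open Fin.NatCast

theorem finRotate_succ_pow_apply (m k : ℕ) (i : Fin (m + 1)) :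
    (finRotate (m + 1) ^ k) i = i + k := by
  induction k with
  | zero => simp
  | succ k ih =>
    rw [pow_succ', Equiv.Perm.mul_apply, ih, finRotate_apply]
    push_cast
    rw [add_assoc]

theorem finRotate_succ_pow_eq_one_of_apply_eq {m k : ℕ} {i : Fin (m + 1)}
    (hi : (finRotate (m + 1) ^ k) i = i) : finRotate (m + 1) ^ k = 1 := by
  rw [finRotate_succ_pow_apply, add_eq_left] at hi
  ext j
  rw [finRotate_succ_pow_apply, hi, add_zero, Equiv.Perm.one_apply]

theorem orderOf_finRotate_succ (m : ℕ) : orderOf (finRotate (m + 1)) = m + 1 := by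
  refine (orderOf_eq_iff m.succ_pos).mpr ⟨?_, fun k hk hk0 hone => ?_⟩
  · exact finRotate_succ_pow_eq_one_of_apply_eq (i := 0) (by
      rw [finRotate_succ_pow_apply, Fin.natCast_self, add_zero])
  · have h0 := congrArg (· 0) hone
    simp only [finRotate_succ_pow_apply, zero_add, Equiv.Perm.one_apply] at h0
    rw [Fin.natCast_eq_zero] at h0
    exact hk0.ne' (Nat.eq_zero_of_dvd_of_lt h0 hk)

theorem eq_one_of_mem_zpowers_finRotate_succ {m : ℕ} {h : Equiv.Perm (Fin (m + 1))}
    (hh : h ∈ zpowers (finRotate (m + 1))) {i : Fin (m + 1)} (hi : h • i = i) : h = 1 := by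
  obtain ⟨k, rfl⟩ := mem_powers_iff_mem_zpowers.mpr hh
  exact finRotate_succ_pow_eq_one_of_apply_eq hi

end Rotation

theorem deza_frankl (n : ℕ) (F : Finset (Equiv.Perm (Fin n)))
    (hint : ∀ σ ∈ F, ∀ π ∈ F, ∃ i : Fin n, σ i = π i) :
    F.card ≤ (n - 1).factorial := by
  cases n with
  | zero => simpa using F.card_le_univ
  | succ m =>
    have hbound := card_mul_card_le_of_intersecting
      (fun h hh i hi => eq_one_of_mem_zpowers_finRotate_succ hh hi) F hint
    rw [Nat.card_zpowers, orderOf_finRotate_succ, Nat.card_perm, Nat.card_fin,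
      Nat.factorial_succ, mul_comm] at hbound
    simpa using Nat.le_of_mul_le_mul_left hbound m.succ_pos
end

section
/- Let \mathcal{F} be a family of k-uniform sets that contains no pseudo sunflower of size s+1. Then |\mathcal{F}| \le s^k. -/
private lemma furedi_aux {α : Type*} [DecidableEq α] :
    ∀ (s : ℕ) (k : ℕ) (F : Finset (Finset α)), (∀ A ∈ F, A.card = k) →
    (¬ ∃ (C : Finset α) (g : Fin (s + 1) → Finset α),
      Function.Injective g ∧ (∀ i, g i ∈ F) ∧ C ⊂ g 0 ∧
      ∀ i j, i ≠ j → Disjoint (g i \ C) (g j \ C)) →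
    F.card ≤ s ^ k := by
  intro s
  induction s with
  | zero =>
    intro k F hk hps
    rcases Nat.eq_zero_or_pos k with rfl | hkpos
    · -- every set is empty, F ⊆ {∅}
      have : F ⊆ {∅} := by
        intro A hA
        simp only [Finset.mem_singleton]
        exact Finset.card_eq_zero.mp (hk A hA)
      simpa using Finset.card_le_card this
    · -- F must be empty
      have : F = ∅ := by
        by_contra h
        obtain ⟨A, hA⟩ := Finset.nonempty_of_ne_empty h
        apply hps
        refine ⟨∅, fun _ => A, fun i j _ => by omega, fun _ => hA, ?_, ?_⟩
        · refine Finset.empty_ssubset.mpr ?_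
          rw [← Finset.card_pos, hk A hA]; exact hkpos
        · intro i j hij
          exact absurd (Fin.ext (by omega)) hij
      simp [this]
  | succ n ih =>
    intro k F hk hps
    rcases F.eq_empty_or_nonempty with rfl | ⟨F₀, hF₀⟩
    · simp
    have hF₀k : F₀.card = k := hk F₀ hF₀
    -- bound each fiber
    have key : ∀ T ∈ F₀.powerset,
        (F.filter (fun A => A ∩ F₀ = T)).card ≤ n ^ (k - T.card) := by
      intro T hT
      have hTsub : T ⊆ F₀ := Finset.mem_powerset.mp hT
      by_cases hTF : T = F₀
      · -- fiber is ⊆ {F₀}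
        have hsub : F.filter (fun A => A ∩ F₀ = T) ⊆ {F₀} := by
          intro A hA
          rcases Finset.mem_filter.mp hA with ⟨hAF, hAT⟩
          have hsub' : F₀ ⊆ A := by
            rw [hTF] at hAT
            intro x hx
            have hx' : x ∈ A ∩ F₀ := by rw [hAT]; exact hx
            exact (Finset.mem_inter.mp hx').1
          have : A = F₀ :=
            (Finset.eq_of_subset_of_card_le hsub' (by rw [hk A hAF, hF₀k])).symm
          simp [this]
        have h1 : (F.filter (fun A => A ∩ F₀ = T)).card ≤ 1 := by
          simpa using Finset.card_le_card hsub
        have : k - T.card = 0 := by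
          rw [hTF, hF₀k]; omega
        rw [this, pow_zero]; exact h1
      · -- main case : link family is PSF-free at level n
        set G := (F.filter (fun A => A ∩ F₀ = T)).image (· \ T) with hG
        have hfact : ∀ A ∈ F.filter (fun A => A ∩ F₀ = T), T ⊆ A := by
          intro A hA
          rcases Finset.mem_filter.mp hA with ⟨_, hAT⟩
          intro x hx
          have hx' : x ∈ A ∩ F₀ := by rw [hAT]; exact hx
          exact (Finset.mem_inter.mp hx').1
        have hcard : (F.filter (fun A => A ∩ F₀ = T)).card = G.card := by
          rw [hG]
          refine (Finset.card_image_of_injOn ?_).symm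
          intro A hA B hB hAB
          have : A \ T ∪ T = B \ T ∪ T := by
            simpa using congrArg (· ∪ T) hAB
          rwa [Finset.sdiff_union_of_subset (hfact A hA),
            Finset.sdiff_union_of_subset (hfact B hB)] at this
        have hGprop : ∀ B ∈ G, (B ∪ T ∈ F) ∧ B ∩ F₀ = ∅ ∧ B.card = k - T.card := by
          intro B hB
          rcases Finset.mem_image.mp hB with ⟨A, hA, rfl⟩
          rcases Finset.mem_filter.mp hA with ⟨hAF, hAT⟩
          have hTA : T ⊆ A := hfact A hA
          refine ⟨by rwa [Finset.sdiff_union_of_subset hTA], ?_, ?_⟩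
          · ext x
            simp only [Finset.mem_inter, Finset.mem_sdiff, Finset.notMem_empty,
              iff_false, not_and]
            rintro ⟨hxA, hxT⟩ hxF₀
            apply hxT
            rw [← hAT]
            exact Finset.mem_inter.mpr ⟨hxA, hxF₀⟩
          · rw [Finset.card_sdiff_of_subset hTA, hk A hAF]
        rw [hcard]
        apply ih (k - T.card) G (fun B hB => (hGprop B hB).2.2)
        rintro ⟨D, h, hinj, hmem, hss, hdisj⟩
        apply hps
        -- lift to a pseudo sunflower of size n+2 with center D ∪ T
        have hhF : ∀ i, h i ∪ T ∈ F := fun i => (hGprop _ (hmem i)).1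
        have hhF₀ : ∀ i, h i ∩ F₀ = ∅ := fun i => (hGprop _ (hmem i)).2.1
        have hhT : ∀ i, h i ∩ T = ∅ := by
          intro i
          apply Finset.eq_empty_of_forall_notMem
          intro x hx
          rcases Finset.mem_inter.mp hx with ⟨hx1, hx2⟩
          have : x ∈ h i ∩ F₀ := Finset.mem_inter.mpr ⟨hx1, hTsub hx2⟩
          simp [hhF₀ i] at this
        refine ⟨D ∪ T, Fin.snoc (fun i => h i ∪ T) F₀, ?_, ?_, ?_, ?_⟩
        · -- injective
          intro i j hij
          induction i using Fin.lastCases with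
          | last =>
            induction j using Fin.lastCases with
            | last => rfl
            | cast j =>
              exfalso
              rw [Fin.snoc_last, Fin.snoc_castSucc] at hij
              apply hTF
              have : F₀ ∩ F₀ = (h j ∪ T) ∩ F₀ := by rw [hij]
              rwa [Finset.inter_self, Finset.union_inter_distrib_right, hhF₀ j,
                Finset.empty_union, Finset.inter_eq_left.mpr hTsub, eq_comm] at this
          | cast i =>
            induction j using Fin.lastCases with
            | last =>
              exfalso
              rw [Fin.snoc_last, Fin.snoc_castSucc] at hij
              apply hTF
              have : (h i ∪ T) ∩ F₀ = F₀ ∩ F₀ := by rw [hij]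
              rwa [Finset.inter_self, Finset.union_inter_distrib_right, hhF₀ i,
                Finset.empty_union, Finset.inter_eq_left.mpr hTsub] at this
            | cast j =>
              rw [Fin.snoc_castSucc, Fin.snoc_castSucc] at hij
              have : h i = h j := by
                have : (h i ∪ T) \ T = (h j ∪ T) \ T := by rw [hij]
                rwa [Finset.union_sdiff_right, Finset.union_sdiff_right,
                  Finset.sdiff_eq_self_of_disjoint
                    (Finset.disjoint_iff_inter_eq_empty.mpr (hhT i)),
                  Finset.sdiff_eq_self_of_disjoint
                    (Finset.disjoint_iff_inter_eq_empty.mpr (hhT j))] at this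
              rw [hinj this]
        · -- membership
          intro i
          induction i using Fin.lastCases with
          | last => rw [Fin.snoc_last]; exact hF₀
          | cast i => rw [Fin.snoc_castSucc]; exact hhF i
        · -- center proper subset of g 0
          have h0 : (0 : Fin (n + 1 + 1)) = Fin.castSucc 0 := rfl
          rw [h0, Fin.snoc_castSucc]
          have hDsub := hss.subset
          obtain ⟨x, hxh, hxD⟩ := Finset.exists_of_ssubset hss
          have hxT : x ∉ T := by
            intro hx
            have : x ∈ h 0 ∩ T := Finset.mem_inter.mpr ⟨by exact hxh, hx⟩
            simp [hhT 0] at this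
          constructor
          · exact Finset.union_subset_union_left hDsub
          · intro hcon
            have : x ∈ D ∪ T := hcon (Finset.mem_union_left T hxh)
            rcases Finset.mem_union.mp this with h' | h'
            · exact hxD h'
            · exact hxT h'
        · -- disjointness of petals
          have hpet : ∀ i, (h i ∪ T) \ (D ∪ T) ⊆ h i \ D := by
            intro i x hx
            rcases Finset.mem_sdiff.mp hx with ⟨hx1, hx2⟩
            rcases Finset.mem_union.mp hx1 with h' | h'
            · exact Finset.mem_sdiff.mpr ⟨h', fun hc => hx2 (Finset.mem_union_left T hc)⟩
            · exact absurd (Finset.mem_union_right D h') hx2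
          have hpetF₀ : ∀ i, Disjoint ((h i ∪ T) \ (D ∪ T)) (F₀ \ (D ∪ T)) := by
            intro i
            rw [Finset.disjoint_left]
            intro x hx1 hx2
            have hx1' := hpet i hx1
            have : x ∈ h i ∩ F₀ :=
              Finset.mem_inter.mpr ⟨(Finset.mem_sdiff.mp hx1').1,
                (Finset.mem_sdiff.mp hx2).1⟩
            simp [hhF₀ i] at this
          intro i j hij
          induction i using Fin.lastCases with
          | last =>
            induction j using Fin.lastCases with
            | last => exact absurd rfl hij
            | cast j =>
              rw [Fin.snoc_last, Fin.snoc_castSucc]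
              exact (hpetF₀ j).symm
          | cast i =>
            induction j using Fin.lastCases with
            | last =>
              rw [Fin.snoc_last, Fin.snoc_castSucc]
              exact hpetF₀ i
            | cast j =>
              rw [Fin.snoc_castSucc, Fin.snoc_castSucc]
              have hne : i ≠ j := fun hc => hij (by rw [hc])
              exact Finset.disjoint_of_subset_left (hpet i)
                (Finset.disjoint_of_subset_right (hpet j) (hdisj i j hne))
    -- sum over fibers
    calc F.card = ∑ T ∈ F₀.powerset, (F.filter (fun A => A ∩ F₀ = T)).card :=
          Finset.card_eq_sum_card_fiberwise
            (fun A _ => Finset.mem_powerset.mpr Finset.inter_subset_right)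
      _ ≤ ∑ T ∈ F₀.powerset, n ^ (k - T.card) := Finset.sum_le_sum key
      _ = ∑ m ∈ Finset.range (F₀.card + 1), (F₀.card).choose m • n ^ (k - m) :=
          Finset.sum_powerset_apply_card (f := fun m => n ^ (k - m)) (x := F₀)
      _ = (n + 1) ^ k := by
          have h := add_pow 1 n k
          simp only [one_pow, one_mul, Nat.cast_id] at h
          rw [hF₀k, show n + 1 = 1 + n by omega, h]
          apply Finset.sum_congr rfl
          intro m _
          rw [smul_eq_mul, mul_comm]

theorem furedi_pseudo_sunflower {α : Type*} [DecidableEq α] (k s : ℕ)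
    (F : Finset (Finset α)) (hk : ∀ A ∈ F, A.card = k)
    (hps : ¬ ∃ (C : Finset α) (g : Fin (s + 1) → Finset α),
      Function.Injective g ∧ (∀ i, g i ∈ F) ∧ C ⊂ g 0 ∧
      ∀ i j, i ≠ j → Disjoint (g i \ C) (g j \ C)) :
    F.card ≤ s ^ k := by
  exact furedi_aux s k F hk hps
end

section
/- Let n \ge 500, r = n/3, q = 4 log_2 n, and f(x) = r^x (n - x)! for real/integer x. Then for every integer x with q \le x \le n, f(x) \le (n-4)!. -/
open Real

private lemma aux_one_add_inv_pow_le (k : ℕ) (hk : 0 < k) :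
    (1 + 1 / (k : ℝ)) ^ k ≤ Real.exp 1 := by
  have hk0 : (0:ℝ) < k := by exact_mod_cast hk
  have h1 : 1 + 1 / (k:ℝ) ≤ Real.exp (1 / k) := by
    have := Real.add_one_le_exp (1 / (k:ℝ)); linarith
  calc (1 + 1/(k:ℝ))^k ≤ (Real.exp (1/(k:ℝ)))^k :=
        pow_le_pow_left₀ (by positivity) h1 k
    _ = Real.exp 1 := by
        rw [← Real.exp_nat_mul]
        congr 1
        field_simp

private lemma aux_pow_div_exp_le_factorial : ∀ k : ℕ, ((k : ℝ) / Real.exp 1) ^ k ≤ k.factorial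
  | 0 => by norm_num
  | (k+1) => by
    have ih := aux_pow_div_exp_le_factorial k
    have he : (0:ℝ) < Real.exp 1 := Real.exp_pos 1
    have he1 : (1:ℝ) ≤ Real.exp 1 := by
      have := Real.add_one_le_exp (1:ℝ); linarith
    rcases Nat.eq_zero_or_pos k with rfl | hk
    · simp only [Nat.factorial, Nat.cast_one, Nat.cast_ofNat, pow_one]
      norm_num
      rw [inv_le_one_iff₀]
      right; linarith
    · have hk0 : (0:ℝ) < k := by exact_mod_cast hk
      have h2 : (((k:ℝ)+1)/Real.exp 1)^k = ((k:ℝ)/Real.exp 1)^k * (1 + 1/(k:ℝ))^k := by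
        rw [← mul_pow]
        congr 1
        field_simp
      have h3 := aux_one_add_inv_pow_le k hk
      have key : (((k:ℝ)+1)/Real.exp 1)^(k+1) ≤ ((k:ℝ)+1) * ((k:ℝ)/Real.exp 1)^k := by
        calc (((k:ℝ)+1)/Real.exp 1)^(k+1)
            = (((k:ℝ)+1)/Real.exp 1) * (((k:ℝ)/Real.exp 1)^k * (1 + 1/(k:ℝ))^k) := by
              rw [pow_succ, h2]; ring
          _ ≤ (((k:ℝ)+1)/Real.exp 1) * (((k:ℝ)/Real.exp 1)^k * Real.exp 1) := by
              apply mul_le_mul_of_nonneg_left _ (by positivity)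
              exact mul_le_mul_of_nonneg_left h3 (by positivity)
          _ = ((k:ℝ)+1) * ((k:ℝ)/Real.exp 1)^k := by
              field_simp
      have : (((k+1:ℕ):ℝ)/Real.exp 1)^(k+1) ≤ ((k:ℝ)+1) * ((k:ℝ)/Real.exp 1)^k := by
        push_cast
        exact key
      refine this.trans ?_
      rw [Nat.factorial_succ]
      push_cast
      have hfk : (0:ℝ) ≤ (k:ℝ)+1 := by positivity
      calc ((k:ℝ)+1) * ((k:ℝ)/Real.exp 1)^k ≤ ((k:ℝ)+1) * (k.factorial : ℝ) :=
            mul_le_mul_of_nonneg_left ih hfk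
        _ = ((k:ℝ)+1) * (k.factorial : ℝ) := rfl

/-- step down: for `3*y ≤ 2*n`, `g (y+1) ≤ g y`. -/
private lemma aux_step_down (n y : ℕ) (hy : y < n) (h3 : 3*y ≤ 2*n) :
    ((n:ℝ)/3)^(y+1) * ((n - (y+1)).factorial : ℝ) ≤ ((n:ℝ)/3)^y * ((n - y).factorial : ℝ) := by
  have hsub : n - y = (n - (y+1)) + 1 := by omega
  have hcast : ((n - (y+1) : ℕ) : ℝ) = (n:ℝ) - (y:ℝ) - 1 := by
    have : ((n - (y+1) : ℕ) : ℝ) = ((n:ℝ) - ((y:ℝ)+1)) := by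
      rw [Nat.cast_sub hy]; push_cast; ring
    rw [this]; ring
  have h1 : (n:ℝ)/3 ≤ ((n - (y+1) : ℕ) : ℝ) + 1 := by
    rw [hcast]
    have h3' : 3*(y:ℝ) ≤ 2*(n:ℝ) := by exact_mod_cast h3
    linarith
  calc ((n:ℝ)/3)^(y+1) * ((n - (y+1)).factorial : ℝ)
      = ((n:ℝ)/3)^y * (((n:ℝ)/3) * ((n - (y+1)).factorial : ℝ)) := by rw [pow_succ]; ring
    _ ≤ ((n:ℝ)/3)^y * ((((n - (y+1) : ℕ) : ℝ) + 1) * ((n - (y+1)).factorial : ℝ)) := by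
        have hn0 : (0:ℝ) ≤ (n:ℝ)/3 := by positivity
        apply mul_le_mul_of_nonneg_left _ (by positivity)
        exact mul_le_mul_of_nonneg_right h1 (by positivity)
    _ = ((n:ℝ)/3)^y * ((n - y).factorial : ℝ) := by
        rw [hsub, Nat.factorial_succ]
        push_cast
        ring

/-- step up: for `2*n ≤ 3*y`, `g y ≤ g (y+1)`. -/
private lemma aux_step_up (n y : ℕ) (hy : y < n) (h3 : 2*n ≤ 3*y) :
    ((n:ℝ)/3)^y * ((n - y).factorial : ℝ) ≤ ((n:ℝ)/3)^(y+1) * ((n - (y+1)).factorial : ℝ) := by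
  have hsub : n - y = (n - (y+1)) + 1 := by omega
  have hcast : ((n - (y+1) : ℕ) : ℝ) = (n:ℝ) - (y:ℝ) - 1 := by
    have : ((n - (y+1) : ℕ) : ℝ) = ((n:ℝ) - ((y:ℝ)+1)) := by
      rw [Nat.cast_sub hy]; push_cast; ring
    rw [this]; ring
  have h1 : ((n - (y+1) : ℕ) : ℝ) + 1 ≤ (n:ℝ)/3 := by
    rw [hcast]
    have h3' : 2*(n:ℝ) ≤ 3*(y:ℝ) := by exact_mod_cast h3
    linarith
  calc ((n:ℝ)/3)^y * ((n - y).factorial : ℝ)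
      = ((n:ℝ)/3)^y * ((((n - (y+1) : ℕ) : ℝ) + 1) * ((n - (y+1)).factorial : ℝ)) := by
        rw [hsub, Nat.factorial_succ]; push_cast; ring
    _ ≤ ((n:ℝ)/3)^y * (((n:ℝ)/3) * ((n - (y+1)).factorial : ℝ)) := by
        apply mul_le_mul_of_nonneg_left _ (by positivity)
        exact mul_le_mul_of_nonneg_right h1 (by positivity)
    _ = ((n:ℝ)/3)^(y+1) * ((n - (y+1)).factorial : ℝ) := by rw [pow_succ]; ring

private lemma aux_mono_down (n a : ℕ) : ∀ b, a ≤ b → 3*b ≤ 2*n →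
    ((n:ℝ)/3)^b * ((n - b).factorial : ℝ) ≤ ((n:ℝ)/3)^a * ((n - a).factorial : ℝ) := by
  intro b hab
  induction b, hab using Nat.le_induction with
  | base => intro _; exact le_rfl
  | succ b hab ih =>
    intro hb
    have hb' : 3*b ≤ 2*n := by omega
    have hbn : b < n := by omega
    exact (aux_step_down n b hbn hb').trans (ih hb')

private lemma aux_mono_up (n x : ℕ) (hx : 2*n ≤ 3*x) : ∀ b, x ≤ b → b ≤ n →
    ((n:ℝ)/3)^x * ((n - x).factorial : ℝ) ≤ ((n:ℝ)/3)^b * ((n - b).factorial : ℝ) := by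
  intro b hxb
  induction b, hxb using Nat.le_induction with
  | base => intro _; exact le_rfl
  | succ b hxb ih =>
    intro hbn
    have hbn' : b < n := by omega
    have h3 : 2*n ≤ 3*b := by omega
    exact (ih (by omega)).trans (aux_step_up n b hbn' h3)

/-- numeric: `log n ≤ 9 log 2 + n/500 - 1` for `n ≥ 500`. -/
private lemma aux_log_bound (N : ℝ) (hN : 500 ≤ N) :
    Real.log N ≤ 9 * Real.log 2 + N/500 - 1 := by
  have h500 : Real.log 500 ≤ 9 * Real.log 2 := by
    have : Real.log 500 ≤ Real.log 512 := Real.log_le_log (by norm_num) (by norm_num)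
    have h512 : Real.log 512 = 9 * Real.log 2 := by
      rw [show (512:ℝ) = 2^(9:ℕ) by norm_num, Real.log_pow]
      norm_num
    linarith
  have hdiv : Real.log (N/500) ≤ N/500 - 1 := Real.log_le_sub_one_of_pos (by linarith)
  have hsplit : Real.log (N/500) = Real.log N - Real.log 500 :=
    Real.log_div (by linarith) (by norm_num)
  linarith

/-- numeric: `4 logb 2 n + 1 ≤ n/10` for `n ≥ 500`. -/
private lemma aux_logb_bound (N : ℝ) (hN : 500 ≤ N) :
    4 * Real.logb 2 N + 1 ≤ N/10 := by
  have hl2lo : (0.6931471:ℝ) < Real.log 2 := by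
    have := Real.log_two_gt_d9; linarith
  have hl2hi : Real.log 2 < 0.6931472 := by
    have := Real.log_two_lt_d9; linarith
  have hL := aux_log_bound N hN
  have hl2pos : (0:ℝ) < Real.log 2 := by linarith
  have key : 4 * Real.log N + Real.log 2 ≤ N/10 * Real.log 2 := by
    nlinarith [mul_le_mul_of_nonneg_right hN (show (0:ℝ) ≤ Real.log 2/10 - 1/125 by linarith)]
  have heq : 4 * Real.logb 2 N + 1 = (4 * Real.log N + Real.log 2) / Real.log 2 := by
    rw [Real.logb]
    field_simp
  rw [heq, div_le_iff₀ hl2pos]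
  calc 4 * Real.log N + Real.log 2 ≤ N/10 * Real.log 2 := key
    _ = N/10 * Real.log 2 := rfl

/-- endpoint: `(n/3)^n ≤ (n-4)!` for `n ≥ 500`. -/
private lemma aux_endpoint_n (n : ℕ) (hn : 500 ≤ n) :
    ((n:ℝ)/3)^n ≤ ((n - 4).factorial : ℝ) := by
  set k := n - 4 with hkdef
  have hkn : (k:ℝ) = (n:ℝ) - 4 := by
    rw [hkdef, Nat.cast_sub (by omega)]; norm_num
  have hN : (500:ℝ) ≤ (n:ℝ) := by exact_mod_cast hn
  have h1 : ((k:ℝ)/Real.exp 1)^k ≤ (k.factorial : ℝ) := aux_pow_div_exp_le_factorial k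
  have hkpos : (0:ℝ) < (k:ℝ) := by rw [hkn]; linarith
  have hmain : ((n:ℝ)/3)^n ≤ ((k:ℝ)/Real.exp 1)^k := by
    have hlhs : (0:ℝ) < ((n:ℝ)/3)^n := by positivity
    have hrhs : (0:ℝ) < ((k:ℝ)/Real.exp 1)^k := by positivity
    rw [← Real.log_le_log_iff hlhs hrhs, Real.log_pow, Real.log_pow,
      Real.log_div (by linarith) (by norm_num),
      Real.log_div (by linarith) (Real.exp_ne_zero 1), Real.log_exp]
    -- goal: n * (log n - log 3) ≤ k * (log k - 1)
    have hl2lo : (0.6931471:ℝ) < Real.log 2 := by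
      have := Real.log_two_gt_d9; linarith
    have hl2hi : Real.log 2 < 0.6931472 := by
      have := Real.log_two_lt_d9; linarith
    have hl3 : 19/12 * Real.log 2 ≤ Real.log 3 := by
      have h2 : Real.log (2^(19:ℕ)) ≤ Real.log (3^(12:ℕ)) :=
        Real.log_le_log (by norm_num) (by norm_num)
      rw [Real.log_pow, Real.log_pow] at h2
      push_cast at h2
      linarith
    have hL := aux_log_bound (n:ℝ) hN
    have hA : Real.log (k:ℝ) ≤ Real.log (n:ℝ) :=
      Real.log_le_log hkpos (by rw [hkn]; linarith)
    have hA0 : 0 ≤ Real.log (k:ℝ) := Real.log_nonneg (by rw [hkn]; linarith)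
    have hdiff : (Real.log (n:ℝ) - Real.log (k:ℝ)) * (k:ℝ) ≤ 4 := by
      have hq : Real.log ((n:ℝ)/(k:ℝ)) ≤ (n:ℝ)/(k:ℝ) - 1 :=
        Real.log_le_sub_one_of_pos (by positivity)
      have hsp : Real.log ((n:ℝ)/(k:ℝ)) = Real.log (n:ℝ) - Real.log (k:ℝ) :=
        Real.log_div (by linarith) (by linarith)
      rw [hsp] at hq
      have h4 : ((n:ℝ)/(k:ℝ) - 1) * (k:ℝ) = 4 := by
        field_simp
        rw [hkn]; ring
      nlinarith
    have hkN : (k:ℝ) = (n:ℝ) - 4 := hkn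
    set N := (n:ℝ)
    set L := Real.log N
    set A := Real.log (k:ℝ)
    set l2 := Real.log 2
    set l3 := Real.log 3
    -- goal: N * (L - l3) ≤ k * (A - 1)
    rw [hkN] at hdiff ⊢
    nlinarith [hdiff, hA, hA0, hL, hl3, hl2lo, hl2hi, hN,
      mul_le_mul_of_nonneg_right hN (show (0:ℝ) ≤ l3 - 1 by nlinarith)]
  exact hmain.trans h1

theorem f_le_factorial_n_sub_4 (n : ℕ) (hn : 500 ≤ n) (x : ℕ)
    (hqx : 4 * Real.logb 2 n ≤ x) (hxn : x ≤ n) :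
    ((n : ℝ) / 3) ^ x * (n - x).factorial ≤ (n - 4).factorial := by
  have hN : (500:ℝ) ≤ (n:ℝ) := by exact_mod_cast hn
  have hn0 : (0:ℝ) < (n:ℝ) := by linarith
  set q : ℝ := 4 * Real.logb 2 n with hq
  have hq0 : 0 ≤ q := by
    have : 0 ≤ Real.logb 2 (n:ℝ) := Real.logb_nonneg (by norm_num) (by linarith)
    rw [hq]; linarith
  set m : ℕ := ⌈q⌉₊ with hm
  have hmx : m ≤ x := Nat.ceil_le.mpr hqx
  have hq16 : (16:ℝ) ≤ q := by
    have h4 : (4:ℝ) ≤ Real.logb 2 (n:ℝ) := by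
      rw [Real.le_logb_iff_rpow_le (by norm_num) (by linarith)]
      have : (2:ℝ)^(4:ℝ) = 16 := by
        rw [show (4:ℝ) = ((4:ℕ):ℝ) by norm_num, Real.rpow_natCast]; norm_num
      rw [this]; linarith
    rw [hq]; linarith
  have hm16 : 16 ≤ m := by
    have h := Nat.le_ceil q
    have : (16:ℝ) ≤ (m:ℝ) := le_trans hq16 h
    exact_mod_cast this
  have hm10 : 10 * m ≤ n := by
    have h1 : (m:ℝ) < q + 1 := Nat.ceil_lt_add_one hq0
    have h2 : q + 1 ≤ (n:ℝ)/10 := aux_logb_bound (n:ℝ) hN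
    have : 10 * (m:ℝ) ≤ (n:ℝ) := by linarith
    exact_mod_cast this
  have hmn : m ≤ n := by omega
  rcases le_or_gt (3*x) (2*n) with hcase | hcase
  · -- decreasing regime: g x ≤ g m ≤ (n-4)!
    have hmono := aux_mono_down n m x hmx hcase
    refine hmono.trans ?_
    -- show g m ≤ (n-4)!
    have hnat : (n - m).factorial * (n - m + 1)^(m - 4) ≤ (n - 4).factorial := by
      have h := Nat.factorial_mul_pow_le_factorial (m := n - m) (n := m - 4)
      have he : (n - m) + (m - 4) = n - 4 := by omega
      rwa [he] at h
    have hreal : ((n:ℝ)/3)^m ≤ ((n - m + 1 : ℕ):ℝ)^(m-4) := by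
      have hc : ((n - m + 1 : ℕ):ℝ) = (n:ℝ) - (m:ℝ) + 1 := by
        rw [Nat.cast_add, Nat.cast_sub hmn]; norm_num
      have hm10' : 10 * (m:ℝ) ≤ (n:ℝ) := by exact_mod_cast hm10
      have h910 : 9*(n:ℝ)/10 ≤ ((n - m + 1 : ℕ):ℝ) := by rw [hc]; linarith
      have hsplit : m = 4 + (m - 4) := by omega
      have step1 : ((n:ℝ)/3)^m = ((n:ℝ)/3)^(4:ℕ) * ((n:ℝ)/3)^(m-4) := by
        rw [← pow_add, ← hsplit]
      have step2 : (9*(n:ℝ)/10)^(m-4) = ((n:ℝ)/3)^(m-4) * ((27:ℝ)/10)^(m-4) := by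
        rw [← mul_pow]
        congr 1
        ring
      have key : ((n:ℝ)/3)^(4:ℕ) ≤ ((27:ℝ)/10)^(m-4) := by
        have k1 : ((n:ℝ)/3)^(4:ℕ) ≤ ((n:ℝ))^(4:ℕ) :=
          pow_le_pow_left₀ (by positivity) (by linarith) 4
        have k2 : ((n:ℝ))^(4:ℕ) ≤ (2:ℝ)^(m:ℕ) := by
          have e1 : (n:ℝ) = (2:ℝ) ^ Real.logb 2 (n:ℝ) :=
            (Real.rpow_logb (by norm_num) (by norm_num) hn0).symm
          have e2 : ((n:ℝ))^(4:ℕ) = (2:ℝ) ^ (Real.logb 2 (n:ℝ) * 4) := by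
            rw [Real.rpow_mul (by norm_num), ← e1, ← Real.rpow_natCast ((n:ℝ)) 4]
            norm_num
          rw [e2, ← Real.rpow_natCast 2 m]
          apply Real.rpow_le_rpow_of_exponent_le (by norm_num)
          have := Nat.le_ceil q
          rw [hq] at this
          have hm' : q ≤ (m:ℝ) := by rw [hq]; exact (Nat.le_ceil q)
          rw [hq] at hm'
          linarith [hm']
        have k3 : (2:ℝ)^(m:ℕ) ≤ ((27:ℝ)/10)^(m-4) := by
          have hsp : (2:ℝ)^(m:ℕ) = (2:ℝ)^(m-4) * (2:ℝ)^(4:ℕ) := by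
            rw [← pow_add]
            congr 1
            omega
          have hsp2 : ((27:ℝ)/10)^(m-4) = (2:ℝ)^(m-4) * ((27:ℝ)/20)^(m-4) := by
            rw [← mul_pow]
            congr 1
            norm_num
          rw [hsp, hsp2]
          apply mul_le_mul_of_nonneg_left _ (by positivity)
          have h12 : 12 ≤ m - 4 := by omega
          calc (2:ℝ)^(4:ℕ) = 16 := by norm_num
            _ ≤ ((27:ℝ)/20)^(12:ℕ) := by norm_num
            _ ≤ ((27:ℝ)/20)^(m-4) := pow_le_pow_right₀ (by norm_num) h12
        exact k1.trans (k2.trans k3)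
      calc ((n:ℝ)/3)^m = ((n:ℝ)/3)^(4:ℕ) * ((n:ℝ)/3)^(m-4) := step1
        _ ≤ ((27:ℝ)/10)^(m-4) * ((n:ℝ)/3)^(m-4) :=
            mul_le_mul_of_nonneg_right key (by positivity)
        _ = (9*(n:ℝ)/10)^(m-4) := by rw [step2]; ring
        _ ≤ ((n - m + 1 : ℕ):ℝ)^(m-4) :=
            pow_le_pow_left₀ (by positivity) h910 _
    calc ((n:ℝ)/3)^m * ((n - m).factorial : ℝ)
        ≤ ((n - m + 1 : ℕ):ℝ)^(m-4) * ((n - m).factorial : ℝ) :=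
          mul_le_mul_of_nonneg_right hreal (by positivity)
      _ = (((n - m).factorial * (n - m + 1)^(m - 4) : ℕ) : ℝ) := by push_cast; ring
      _ ≤ ((n - 4).factorial : ℝ) := by exact_mod_cast hnat
  · -- increasing regime: g x ≤ g n = (n/3)^n ≤ (n-4)!
    have hmono := aux_mono_up n x (by omega) n (by omega) le_rfl
    refine hmono.trans ?_
    have : n - n = 0 := by omega
    rw [this]
    simp only [Nat.factorial_zero, Nat.cast_one, mul_one]
    exact aux_endpoint_n n hn
end

section
/- Let \mathcal{H} be an intersecting family of sets each of size at most s. Then the basis \mathcal{A}(\mathcal{H}, s) obtained by the pseudo-sunflower replacement procedure is also intersecting. -/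
/-- One replacement step of the pseudo-sunflower procedure: if `H` contains an
`s`-uniform pseudo sunflower of size `s+1` with center `C`, replace all sets of
`H` containing `C` by the single set `C`. -/
def PseudoSunflowerStep {α : Type*} [DecidableEq α] (s : ℕ)
    (H K : Finset (Finset α)) : Prop :=
  ∃ (C : Finset α) (g : Fin (s + 1) → Finset α),
    (∀ i, g i ∈ H) ∧ (∀ i, (g i).card = s) ∧ C ⊂ g 0 ∧
    (∀ i j, i ≠ j → Disjoint (g i \ C) (g j \ C)) ∧
    K = H.filter (fun T => ¬ C ⊆ T) ∪ {C}

lemma step_preserves_intersecting {α : Type*} [DecidableEq α] (s : ℕ)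
    (H K : Finset (Finset α))
    (h : PseudoSunflowerStep s H K)
    (hsize : ∀ T ∈ H, T.card ≤ s)
    (hint : ∀ A ∈ H, ∀ B ∈ H, (A ∩ B).Nonempty) :
    (∀ T ∈ K, T.card ≤ s) ∧ (∀ A ∈ K, ∀ B ∈ K, (A ∩ B).Nonempty) := by
  obtain ⟨C, g, hg, hcard, hsub, hdisj, hK⟩ := h
  -- C meets every member of H
  have hCmeets : ∀ B ∈ H, (C ∩ B).Nonempty := by
    intro B hB
    by_contra hne
    rw [Finset.not_nonempty_iff_eq_empty] at hne
    have hx : ∀ i : Fin (s + 1), ∃ x, x ∈ g i ∩ B := fun i => hint _ (hg i) _ hB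
    choose x hxmem using hx
    have hxB : ∀ i, x i ∈ B := fun i => (Finset.mem_inter.mp (hxmem i)).2
    have hxgC : ∀ i, x i ∈ g i \ C := by
      intro i
      refine Finset.mem_sdiff.mpr ⟨(Finset.mem_inter.mp (hxmem i)).1, fun hC => ?_⟩
      have : x i ∈ C ∩ B := Finset.mem_inter.mpr ⟨hC, hxB i⟩
      simp [hne] at this
    have hinj : Function.Injective x := by
      intro i j hij
      by_contra hne'
      exact Finset.disjoint_left.mp (hdisj i j hne') (hxgC i) (hij ▸ hxgC j)
    have hle : s + 1 ≤ B.card := by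
      have hsubB : (Finset.univ.image x) ⊆ B :=
        Finset.image_subset_iff.mpr (fun i _ => hxB i)
      have := Finset.card_le_card hsubB
      rwa [Finset.card_image_of_injective _ hinj, Finset.card_univ,
        Fintype.card_fin] at this
    have := hsize B hB
    omega
  have hCcard : C.card ≤ s := by
    have := Finset.card_lt_card hsub
    have := hcard 0
    omega
  have hCne : C.Nonempty := by
    obtain ⟨x, hx⟩ := hCmeets (g 0) (hg 0)
    exact ⟨x, (Finset.mem_inter.mp hx).1⟩
  have hmem : ∀ T ∈ K, T ∈ H ∨ T = C := by
    intro T hT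
    rw [hK, Finset.mem_union, Finset.mem_singleton] at hT
    rcases hT with hT | hT
    · exact Or.inl (Finset.mem_filter.mp hT).1
    · exact Or.inr hT
  constructor
  · intro T hT
    rcases hmem T hT with hT | rfl
    · exact hsize T hT
    · exact hCcard
  · intro A hA B hB
    rcases hmem A hA with hA' | rfl <;> rcases hmem B hB with hB' | rfl
    · exact hint A hA' B hB'
    · rw [Finset.inter_comm]; exact hCmeets A hA'
    · exact hCmeets B hB'
    · rwa [Finset.inter_self]

theorem basis_of_intersecting_is_intersecting {α : Type*} [DecidableEq α]
    (s : ℕ) (H K : Finset (Finset α))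
    (hsize : ∀ T ∈ H, T.card ≤ s)
    (hint : ∀ A ∈ H, ∀ B ∈ H, (A ∩ B).Nonempty)
    (hreach : Relation.ReflTransGen (PseudoSunflowerStep s) H K) :
    ∀ A ∈ K, ∀ B ∈ K, (A ∩ B).Nonempty := by
  have main : (∀ T ∈ K, T.card ≤ s) ∧ (∀ A ∈ K, ∀ B ∈ K, (A ∩ B).Nonempty) := by
    induction hreach with
    | refl => exact ⟨hsize, hint⟩
    | tail _ hstep ih =>
      exact step_preserves_intersecting s _ _ hstep ih.1 ih.2
  exact main.2
end
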